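/- Fix 0 < σ < 1/2 and set β = log 2 / log(1/σ). For k ∈ ℕ let r_k = σ^k/2, R_k = σ^{k-1}/4, r'_k = (log 4)^{-p} 2^{-k-1} k^{-p} and R'_k = (log 4)^{-p} 2^{-k-1}(k-1)^{-p} (for k ≥ 2), with p > 1/2. Define the radial (sup-norm) stretching ρ_k(x) = (a‖x‖+b) x/‖x‖ on the frame A_k = {x ∈ ℝ² : r_k ≤ ‖x‖ ≤ R_k}, where ‖x‖ = max(|x₁|,|x₂|), a = (R'_k − r'_k)/(R_k − r_k), b = (R_k r'_k − R'_k r_k)/(R_k − r_k). Then there is a constant C = C(σ, p) independent of k such that ‖ρ_k(x) − ρ_k(y)‖ ≤ C ‖x − y‖^β for all x, y ∈ A_k. -/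

import Mathlib

/-!
On the frame `A_k` the stretching is Lipschitz with constant `|a| + 2|b|/r_k`, which is of order
`2⁻ᵏ / σᵏ`, while `A_k` has diameter of order `σᵏ`. A Lipschitz bound at scale `D` gives a
`β`-Hölder bound at the cost of a factor `D^(1-β)`; since `σ^β = 1/2`, this factor is `(2σ)ᵏ`,
which exactly cancels the growth of the Lipschitz constant.
-/

open Real

section RadialStretch

variable {E : Type*} [NormedAddCommGroup E] [NormedSpace ℝ E]

/-- The radial stretching `x ↦ (a‖x‖ + b) x/‖x‖`, sending the sphere of radius `s` to the one of
radius `a s + b`. -/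
noncomputable def radialStretch (a b : ℝ) (x : E) : E := ((a * ‖x‖ + b) / ‖x‖) • x

lemma radialStretch_eq_add (a b : ℝ) (x : E) :
    radialStretch a b x = a • x + b • (‖x‖⁻¹ • x) := by
  rcases eq_or_ne x 0 with rfl | hx
  · simp [radialStretch]
  · have hx' : ‖x‖ ≠ 0 := norm_ne_zero_iff.mpr hx
    rw [radialStretch, smul_smul, ← add_smul]
    congr 1
    field_simp

lemma norm_inv_norm_smul_sub_le {x y : E} (hx : x ≠ 0) (hy : y ≠ 0) :
    ‖‖x‖⁻¹ • x - ‖y‖⁻¹ • y‖ ≤ 2 * ‖x - y‖ / ‖x‖ := by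
  have hx' : 0 < ‖x‖ := norm_pos_iff.mpr hx
  have hy' : 0 < ‖y‖ := norm_pos_iff.mpr hy
  have hsplit : ‖x‖⁻¹ • x - ‖y‖⁻¹ • y = ‖x‖⁻¹ • (x - y) + ((‖y‖ - ‖x‖) / (‖x‖ * ‖y‖)) • y := by
    rw [smul_sub, sub_div, div_mul_cancel_right₀ hy'.ne', div_mul_cancel_left₀ hx'.ne', sub_smul]
    abel
  calc ‖‖x‖⁻¹ • x - ‖y‖⁻¹ • y‖
      ≤ ‖x‖⁻¹ * ‖x - y‖ + |‖y‖ - ‖x‖| / (‖x‖ * ‖y‖) * ‖y‖ := by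
        rw [hsplit]
        refine (norm_add_le _ _).trans_eq ?_
        rw [norm_smul, norm_smul, norm_inv, norm_norm, Real.norm_eq_abs, abs_div,
          abs_of_pos (mul_pos hx' hy')]
    _ = (‖x - y‖ + |‖x‖ - ‖y‖|) / ‖x‖ := by
        rw [abs_sub_comm]
        field_simp
    _ ≤ (‖x - y‖ + ‖x - y‖) / ‖x‖ := by gcongr; exact abs_norm_sub_norm_le x y
    _ = 2 * ‖x - y‖ / ‖x‖ := by ring

lemma norm_radialStretch_sub_le {a b r : ℝ} (hr : 0 < r) {x y : E} (hx : r ≤ ‖x‖)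
    (hy : r ≤ ‖y‖) :
    ‖radialStretch a b x - radialStretch a b y‖ ≤ (|a| + 2 * |b| / r) * ‖x - y‖ := by
  have hx0 : x ≠ 0 := norm_pos_iff.mp (hr.trans_le hx)
  have hy0 : y ≠ 0 := norm_pos_iff.mp (hr.trans_le hy)
  have hunit : ‖‖x‖⁻¹ • x - ‖y‖⁻¹ • y‖ ≤ 2 * ‖x - y‖ / r :=
    (norm_inv_norm_smul_sub_le hx0 hy0).trans (by gcongr)
  calc ‖radialStretch a b x - radialStretch a b y‖
      = ‖a • (x - y) + b • (‖x‖⁻¹ • x - ‖y‖⁻¹ • y)‖ := by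
        rw [radialStretch_eq_add, radialStretch_eq_add, smul_sub, smul_sub]
        congr 1
        abel
    _ ≤ |a| * ‖x - y‖ + |b| * (2 * ‖x - y‖ / r) := by
        refine (norm_add_le _ _).trans ?_
        rw [norm_smul, norm_smul, Real.norm_eq_abs, Real.norm_eq_abs]
        gcongr
    _ = (|a| + 2 * |b| / r) * ‖x - y‖ := by ring

end RadialStretch

/-- `(R' - r') / (R - r)` and `(R r' - R' r) / (R - r)` are the coefficients `a`, `b` of the affine
map `[r, R] → [r', R']`. -/
lemma radialStretch_lipschitz_const_le {r R r' R' Q : ℝ} (hr : 0 < r) (hrR : r < R)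
    (hr' : 0 ≤ r') (hr'Q : r' ≤ Q) (hR' : 0 ≤ R') (hR'Q : R' ≤ Q) :
    |(R' - r') / (R - r)| + 2 * |(R * r' - R' * r) / (R - r)| / r ≤
      Q * (r + 2 * R) / (r * (R - r)) := by
  have hRr : 0 < R - r := sub_pos.mpr hrR
  have hslope : |R' - r'| ≤ Q := abs_sub_le_iff.mpr ⟨by linarith, by linarith⟩
  have hintercept : |R * r' - R' * r| ≤ Q * R := by
    have h₁ : R * r' ≤ Q * R := by nlinarith
    have h₂ : R' * r ≤ Q * R := by nlinarith
    exact abs_sub_le_iff.mpr ⟨by nlinarith, by nlinarith⟩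
  rw [abs_div, abs_div, abs_of_pos hRr]
  calc |R' - r'| / (R - r) + 2 * (|R * r' - R' * r| / (R - r)) / r
      ≤ Q / (R - r) + 2 * (Q * R / (R - r)) / r := by gcongr
    _ = Q * (r + 2 * R) / (r * (R - r)) := by field_simp

lemma le_rpow_one_sub_mul_rpow {t D β : ℝ} (ht : 0 ≤ t) (htD : t ≤ D) (hβ : β ≤ 1) :
    t ≤ D ^ (1 - β) * t ^ β := by
  rcases ht.eq_or_lt with rfl | ht
  · exact mul_nonneg (rpow_nonneg (by simpa using htD) _) (rpow_nonneg le_rfl _)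
  · calc t = t ^ (1 - β) * t ^ β := by rw [← rpow_add ht, sub_add_cancel, rpow_one]
      _ ≤ D ^ (1 - β) * t ^ β := by gcongr

section HolderExponent

variable {σ : ℝ}

lemma rpow_log_two_div_log_inv (hσ0 : 0 < σ) (hσ1 : σ ≠ 1) :
    σ ^ (log 2 / log (1 / σ)) = 1 / 2 := by
  have hlog : log σ ≠ 0 := log_ne_zero_of_pos_of_ne_one hσ0 hσ1
  rw [rpow_def_of_pos hσ0, one_div, log_inv, div_neg, mul_neg, mul_div_cancel₀ _ hlog,
    exp_neg, exp_log two_pos, one_div]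

lemma log_two_div_log_inv_le_one (hσ0 : 0 < σ) (hσ : σ < 1 / 2) :
    log 2 / log (1 / σ) ≤ 1 := by
  have h2 : 2 < 1 / σ := by rw [lt_div_iff₀ hσ0]; linarith
  rw [div_le_one (log_pos (by linarith))]
  exact (log_lt_log two_pos h2).le

lemma pow_rpow_one_sub_log_two_div (hσ0 : 0 < σ) (hσ1 : σ ≠ 1) (n : ℕ) :
    (σ ^ n) ^ (1 - log 2 / log (1 / σ)) = (2 * σ) ^ n := by
  rw [← rpow_natCast, ← rpow_mul hσ0.le, mul_comm, rpow_mul hσ0.le, rpow_sub hσ0, rpow_one,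
    rpow_log_two_div_log_inv hσ0 hσ1, rpow_natCast]
  ring

end HolderExponent

lemma frame_lipschitz_bound_mul_pow {σ : ℝ} (hσ0 : 0 < σ) (hσ : σ < 1 / 2) (n : ℕ) (Q : ℝ) :
    Q * (σ ^ (n + 1) / 2 + 2 * (σ ^ n / 4)) / (σ ^ (n + 1) / 2 * (σ ^ n / 4 - σ ^ (n + 1) / 2)) *
      (2 * σ) ^ n = 2 ^ (n + 2) * Q * (1 + σ) / (σ * (1 - 2 * σ)) := by
  have hσn : σ ^ n ≠ 0 := pow_ne_zero n hσ0.ne'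
  have hσ2 : 1 - σ * 2 ≠ 0 := by linarith
  have hσ4 : 2 - σ * 4 ≠ 0 := by linarith
  rw [pow_succ, mul_pow, pow_add]
  field_simp
  ring

lemma two_pow_mul_two_rpow_neg (n : ℕ) : (2 : ℝ) ^ (n + 2) * 2 ^ (-((n : ℝ) + 1) - 1) = 1 := by
  rw [← rpow_natCast, ← rpow_add two_pos]
  push_cast
  ring_nf
  exact rpow_zero 2

/-- the radial (sup-norm) stretching of the frame
`A_k = {r_k ≤ ‖x‖ ≤ R_k}` onto `A'_k = {r'_k ≤ ‖x‖ ≤ R'_k}` is Hölder continuous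
with exponent `β = log 2 / log(1/σ)` and a constant `C(σ,p)` independent of `k`.
Here ℝ × ℝ carries the sup norm `‖x‖ = max(|x₁|,|x₂|)`. -/
theorem radial_stretching_holder
    (σ p : ℝ) (hσ0 : 0 < σ) (hσ : σ < 1/2) (hp : 1/2 < p) :
    ∃ C : ℝ, 0 < C ∧ ∀ k : ℕ, 2 ≤ k →
      ∀ rk Rk rk' Rk' a b : ℝ,
        rk = σ ^ k / 2 →
        Rk = σ ^ (k - 1) / 4 →
        rk' = (Real.log 4) ^ (-p) * (2:ℝ) ^ (-(k:ℝ) - 1) * (k:ℝ) ^ (-p) →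
        Rk' = (Real.log 4) ^ (-p) * (2:ℝ) ^ (-(k:ℝ) - 1) * ((k:ℝ) - 1) ^ (-p) →
        a = (Rk' - rk') / (Rk - rk) →
        b = (Rk * rk' - Rk' * rk) / (Rk - rk) →
        ∀ x y : ℝ × ℝ,
          rk ≤ ‖x‖ → ‖x‖ ≤ Rk → rk ≤ ‖y‖ → ‖y‖ ≤ Rk →
          ‖((a * ‖x‖ + b) / ‖x‖) • x - ((a * ‖y‖ + b) / ‖y‖) • y‖ ≤
            C * ‖x - y‖ ^ (Real.log 2 / Real.log (1/σ)) := by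
  have h2σ : 0 < 1 - 2 * σ := by linarith
  refine ⟨log 4 ^ (-p) * (1 + σ) / (σ * (1 - 2 * σ)), by positivity, ?_⟩
  rintro k hk rk Rk rk' Rk' a b rfl rfl rfl rfl rfl rfl x y hx₀ hx₁ hy₀ hy₁
  obtain ⟨n, rfl⟩ : ∃ n, k = n + 1 := ⟨k - 1, by omega⟩
  have hn : (1 : ℝ) ≤ n := by exact_mod_cast Nat.le_of_succ_le_succ hk
  simp only [Nat.add_sub_cancel, Nat.cast_add_one, add_sub_cancel_right] at hx₀ hx₁ hy₀ hy₁ ⊢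
  set Q := log 4 ^ (-p) * (2 : ℝ) ^ (-((n : ℝ) + 1) - 1)
  have hQ : 0 ≤ Q := by positivity
  have hradius (s : ℝ) (hs : 1 ≤ s) : 0 ≤ Q * s ^ (-p) ∧ Q * s ^ (-p) ≤ Q :=
    ⟨by positivity, mul_le_of_le_one_right hQ (rpow_le_one_of_one_le_of_nonpos hs (by linarith))⟩
  have hr : 0 < σ ^ (n + 1) / 2 := by positivity
  have hrR : σ ^ (n + 1) / 2 < σ ^ n / 4 := by
    rw [pow_succ]; nlinarith [pow_pos hσ0 n]
  have hlip := radialStretch_lipschitz_const_le hr hrR (hradius (n + 1) (by linarith)).1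
    (hradius (n + 1) (by linarith)).2 (hradius n hn).1 (hradius n hn).2
  have hdist : ‖x - y‖ ≤ σ ^ n := by linarith [norm_sub_le x y, pow_pos hσ0 n]
  calc _ = ‖radialStretch _ _ x - radialStretch _ _ y‖ := rfl
    _ ≤ _ * ‖x - y‖ := norm_radialStretch_sub_le hr hx₀ hy₀
    _ ≤ _ * ((σ ^ n) ^ (1 - log 2 / log (1 / σ)) * ‖x - y‖ ^ (log 2 / log (1 / σ))) := by
        gcongr
        exact le_rpow_one_sub_mul_rpow (norm_nonneg _) hdist (log_two_div_log_inv_le_one hσ0 hσ)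
    _ ≤ _ := by
        rw [pow_rpow_one_sub_log_two_div hσ0 (by linarith), ← mul_assoc]
        gcongr
        refine (mul_le_mul_of_nonneg_right hlip (by positivity)).trans_eq ?_
        rw [frame_lipschitz_bound_mul_pow hσ0 hσ, mul_left_comm, two_pow_mul_two_rpow_neg,
          mul_one]
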